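/- arXiv:2102.10641 — 6 statements merged into one kernel-verified Lean document; each statement's English description precedes it below -/
import Mathlib

section
/- The solution of the initial value problem α'' - α = F₂, α(0) = p₀, α'(0) = v₀ in ℝ⁴ with a metric of index 2, where p₀, v₀, F₂ are mutually orthogonal, p₀ is unit spacelike, v₀ is unit timelike, and F₂ is lightlike, is α(s) = cosh(s)(p₀ + F₂) + sinh(s)v₀ - F₂, and this curve lies in the hyperquadric {v : ⟨v,v⟩ = 1} with ⟨α'(s), α'(s)⟩ = -1 for all s. -/
/-- The index-2 inner product on ℝ⁴₂: ⟨x,y⟩ = -x₁y₁ - x₂y₂ + x₃y₃ + x₄y₄. -/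
noncomputable def quad2 (x y : Fin 4 → ℝ) : ℝ :=
  -(x 0 * y 0) - x 1 * y 1 + x 2 * y 2 + x 3 * y 3

/-- The solution of the IVP α'' - α = F₂, α(0) = p₀, α'(0) = v₀ in ℝ⁴₂, with p₀, v₀, F₂
mutually orthogonal, p₀ unit spacelike, v₀ unit timelike and F₂ lightlike, is
α(s) = cosh(s)(p₀ + F₂) + sinh(s)v₀ - F₂, it lies in the hyperquadric {⟨v,v⟩ = 1}
and satisfies ⟨α',α'⟩ = -1. -/
theorem stmt1 (p₀ v₀ F₂ : Fin 4 → ℝ)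
    (hp : quad2 p₀ p₀ = 1) (hv : quad2 v₀ v₀ = -1)
    (hF : quad2 F₂ F₂ = 0) (hFne : F₂ ≠ 0)
    (hpv : quad2 p₀ v₀ = 0) (hpF : quad2 p₀ F₂ = 0) (hvF : quad2 v₀ F₂ = 0)
    (α : ℝ → Fin 4 → ℝ)
    (hα : α = fun s => Real.cosh s • (p₀ + F₂) + Real.sinh s • v₀ - F₂) :
    α 0 = p₀ ∧ deriv α 0 = v₀ ∧
    ∀ s, deriv (deriv α) s - α s = F₂ ∧
      quad2 (α s) (α s) = 1 ∧ quad2 (deriv α s) (deriv α s) = -1 := by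
  subst hα
  have hd : ∀ s : ℝ, HasDerivAt
      (fun s => Real.cosh s • (p₀ + F₂) + Real.sinh s • v₀ - F₂)
      (Real.sinh s • (p₀ + F₂) + Real.cosh s • v₀) s := by
    intro s
    have h1 := (Real.hasDerivAt_cosh s).smul_const (p₀ + F₂)
    have h2 := (Real.hasDerivAt_sinh s).smul_const v₀
    simpa using (h1.add h2).sub_const F₂
  have hd' : deriv (fun s => Real.cosh s • (p₀ + F₂) + Real.sinh s • v₀ - F₂)
      = fun s => Real.sinh s • (p₀ + F₂) + Real.cosh s • v₀ := by
    funext s; exact (hd s).deriv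
  have hdd : ∀ s : ℝ, HasDerivAt
      (fun s => Real.sinh s • (p₀ + F₂) + Real.cosh s • v₀)
      (Real.cosh s • (p₀ + F₂) + Real.sinh s • v₀) s := by
    intro s
    exact ((Real.hasDerivAt_sinh s).smul_const (p₀ + F₂)).add
      ((Real.hasDerivAt_cosh s).smul_const v₀)
  have hdd' : deriv (deriv (fun s => Real.cosh s • (p₀ + F₂) + Real.sinh s • v₀ - F₂))
      = fun s => Real.cosh s • (p₀ + F₂) + Real.sinh s • v₀ := by
    rw [hd']; funext s; exact (hdd s).deriv
  refine ⟨?_, ?_, fun s => ⟨?_, ?_, ?_⟩⟩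
  · funext i; simp
  · rw [hd']; funext i; simp
  · rw [hdd']; funext i
    simp only [Pi.sub_apply, Pi.add_apply, Pi.smul_apply, smul_eq_mul]
    ring
  · have hch := Real.cosh_sq_sub_sinh_sq s
    simp only [quad2, Pi.sub_apply, Pi.add_apply, Pi.smul_apply, smul_eq_mul] at *
    linear_combination (Real.cosh s)^2 * hp + (Real.sinh s)^2 * hv
      + (Real.cosh s - 1)^2 * hF + 2 * Real.cosh s * Real.sinh s * hpv
      + 2 * Real.cosh s * (Real.cosh s - 1) * hpF
      + 2 * Real.sinh s * (Real.cosh s - 1) * hvF + hch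
  · rw [hd']
    have hch := Real.cosh_sq_sub_sinh_sq s
    simp only [quad2, Pi.add_apply, Pi.smul_apply, smul_eq_mul] at *
    linear_combination (Real.sinh s)^2 * hp + (Real.cosh s)^2 * hv
      + (Real.sinh s)^2 * hF + 2 * Real.cosh s * Real.sinh s * hpv
      + 2 * (Real.sinh s)^2 * hpF + 2 * Real.cosh s * Real.sinh s * hvF - hch
end

section
/- There is no nondegenerate real hypersurface in ℂPⁿ_p whose shape operator vanishes identically on an open set: if A ≡ 0 on an open subset Ω of a nondegenerate real hypersurface M in ℂPⁿ_p, then the Codazzi equation forces g(X, φY) = 0 for all tangent X, Y, which is contradicted by taking Y = φX for a unit X in the maximal holomorphic distribution. -/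
/-- There is no nondegenerate real hypersurface of ℂPⁿ_p whose shape operator vanishes
on an open set: if A ≡ 0, the Codazzi equation reduces to
0 = η(X)φY - η(Y)φX + 2g(X,φY)ξ for all tangent X, Y, and taking a unit X in the
maximal holomorphic distribution together with Y = φX yields a contradiction. -/
theorem stmt6 (V : Type*) [AddCommGroup V] [Module ℝ V]
    (g : V →ₗ[ℝ] V →ₗ[ℝ] ℝ) (hsym : ∀ X Y, g X Y = g Y X)
    (ξ : V) (ε : ℝ) (hε : ε ≠ 0) (hgξ : g ξ ξ = ε)
    (φ : V →ₗ[ℝ] V)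
    (hφ2 : ∀ X, φ (φ X) = -X + (ε * g X ξ) • ξ)
    (hηφ : ∀ X, g (φ X) ξ = 0)
    (hCodazzi : ∀ X Y : V,
      (0 : V) = (g X ξ) • φ Y - (g Y ξ) • φ X + (2 * g X (φ Y)) • ξ)
    (hX : ∃ X : V, g X ξ = 0 ∧ g X X ≠ 0) :
    False := by
  obtain ⟨X, hXξ, hXX⟩ := hX
  have h := hCodazzi X (φ X)
  rw [hXξ, hφ2 X, hηφ X, hXξ] at h
  have h2 : (0 : V) = (2 * g X (-X + (0:ℝ) • ξ)) • ξ := by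
    simpa using h
  have h3 : g X (-X + (0:ℝ) • ξ) = - g X X := by simp
  rw [h3] at h2
  have h4 := congrArg (fun v => g v ξ) h2
  simp [hgξ, hε] at h4
  exact hXX h4
end

section
/- Let M be a minimal ruled real hypersurface in ℂPⁿ_p with Aξ = U, U ∈ 𝒟 non-lightlike. Then ∇_ξ U = 0, i.e., the vector field U is parallel along the integral curves of ξ in M. -/
/-- For a minimal ruled real hypersurface M of ℂPⁿ_p with Aξ = U ∈ 𝒟 non-lightlike,
the vector field U is parallel along the integral curves of ξ: ∇_ξ U = 0.
The setting is axiomatized: R is the ring of smooth functions on M, V the R-module of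
tangent vector fields, g the (nondegenerate) induced metric with directional derivative
act, nabla the Levi-Civita connection of M, φ, ξ, η the almost contact structure with
∇_X ξ = φAX, and A the shape operator satisfying the Codazzi equation; minimality and
ruledness give Aξ = U with g(U,ξ) = 0 and AX = ε g(X,U) ξ for X ∈ 𝒟 = ξ^⊥. -/
theorem stmt8 (R : Type*) [CommRing R] [Algebra ℝ R]
    (V : Type*) [AddCommGroup V] [Module R V]
    (g : V →ₗ[R] V →ₗ[R] R) (hsym : ∀ X Y, g X Y = g Y X)
    (hnondeg : ∀ X : V, (∀ Y, g X Y = 0) → X = 0)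
    (act : V → R → R) (hact0 : ∀ X, act X 0 = 0)
    (hactc : ∀ X (c : ℝ), act X (algebraMap ℝ R c) = 0)
    (nabla : V → V → V)
    (hcompat : ∀ X Y Z, act X (g Y Z) = g (nabla X Y) Z + g Y (nabla X Z))
    (ξ : V) (ε : ℝ) (hε : ε = 1 ∨ ε = -1)
    (hgξ : g ξ ξ = algebraMap ℝ R ε)
    (φ : V →ₗ[R] V) (hskew : ∀ X Y, g (φ X) Y = -(g X (φ Y)))
    (hφξ : φ ξ = 0) (hηφ : ∀ X, g (φ X) ξ = 0)
    (A : V →ₗ[R] V) (hAsym : ∀ X Y, g (A X) Y = g X (A Y))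
    (hnxi : ∀ X, nabla X ξ = φ (A X))
    (hCodazzi : ∀ X Y, nabla X (A Y) - A (nabla X Y) - (nabla Y (A X) - A (nabla Y X))
      = (g X ξ) • φ Y - (g Y ξ) • φ X + ((2 : R) * g X (φ Y)) • ξ)
    (U : V) (hUD : g U ξ = 0) (hUnl : ¬ (U ≠ 0 ∧ g U U = 0))
    (hAξ : A ξ = U)
    (hAD : ∀ X, g X ξ = 0 → A X = ((algebraMap ℝ R ε) * g X U) • ξ) :
    nabla ξ U = 0 := by
  classical
  set e := algebraMap ℝ R ε with he
  have e2 : e * e = 1 := by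
    rw [he, ← map_mul, ← map_one (algebraMap ℝ R)]
    congr 1
    rcases hε with h | h <;> rw [h] <;> ring
  -- g ξ (φ X) = 0 for all X
  have hξφ : ∀ X, g ξ (φ X) = 0 := by
    intro X
    have h := hskew ξ X
    rw [hφξ, map_zero, LinearMap.zero_apply] at h
    linear_combination h
  -- g U (φ U) = 0
  have hUφU : g U (φ U) = 0 := by
    have h1 : g U (φ U) = -(g U (φ U)) := by rw [← hskew, hsym]
    have h2 : g U (φ U) + g U (φ U) = 0 := by linear_combination h1
    have h3 : g U (φ U) = (2 : ℝ)⁻¹ • ((2 : ℝ) • g U (φ U)) := by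
      rw [smul_smul]; norm_num
    rw [two_smul] at h3
    rw [h3, h2, smul_zero]
  have hnξξ : nabla ξ ξ = φ U := by rw [hnxi, hAξ]
  -- g (∇_ξ U) ξ = 0
  have hB : g (nabla ξ U) ξ = 0 := by
    have h := hcompat ξ U ξ
    rw [hUD, hact0, hnξξ, hUφU, add_zero] at h
    exact h.symm
  -- key: g Z (∇_ξ U) = 0 for Z ∈ 𝒟
  have hD : ∀ Z, g Z ξ = 0 → g Z (nabla ξ U) = 0 := by
    intro Z hZ
    have hφAZ : φ (A Z) = 0 := by rw [hAD Z hZ, map_smul, hφξ, smul_zero]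
    -- g (∇_Z U) ξ = 0
    have h1 : g (nabla Z U) ξ = 0 := by
      have h := hcompat Z U ξ
      rw [hUD, hact0, hnxi, hφAZ, map_zero, add_zero] at h
      exact h.symm
    -- g (A Z) ξ = g Z U
    have hAZξ : g (A Z) ξ = g Z U := by
      rw [hAD Z hZ, map_smul, LinearMap.smul_apply, hgξ, smul_eq_mul]
      linear_combination g Z U * e2
    -- g (A Z) (φ U) = 0
    have hAZφU : g (A Z) (φ U) = 0 := by
      rw [hAD Z hZ, map_smul, LinearMap.smul_apply, hξφ, smul_eq_mul, mul_zero]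
    -- g (∇_ξ (A Z)) ξ = act ξ (g Z U)
    have h2 : g (nabla ξ (A Z)) ξ = act ξ (g Z U) := by
      have h := hcompat ξ (A Z) ξ
      rw [hAZξ, hnξξ, hAZφU, add_zero] at h
      exact h.symm
    -- g (A (∇_ξ Z)) ξ = g (∇_ξ Z) U
    have h3 : g (A (nabla ξ Z)) ξ = g (nabla ξ Z) U := by rw [hAsym, hAξ]
    -- g (A (∇_Z ξ)) ξ = 0
    have h4 : g (A (nabla Z ξ)) ξ = 0 := by
      rw [hnxi, hφAZ, map_zero, map_zero, LinearMap.zero_apply]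
    -- Codazzi paired with ξ
    have hC := congrArg (fun W => g W ξ) (hCodazzi ξ Z)
    simp only [map_sub, map_add, map_smul, LinearMap.sub_apply, LinearMap.add_apply,
      LinearMap.smul_apply, smul_eq_mul] at hC
    rw [hAξ] at hC
    rw [h2, h3, h1, h4, hηφ, hφξ, map_zero, LinearMap.zero_apply, hξφ] at hC
    have h5 : act ξ (g Z U) = g (nabla ξ Z) U := by
      linear_combination hC
    have h6 := hcompat ξ Z U
    rw [h5] at h6
    linear_combination -h6
  -- conclude: g Y (∇_ξ U) = 0 for all Y
  have hall : ∀ Y, g Y (nabla ξ U) = 0 := by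
    intro Y
    have hZ : g (Y - (e * g Y ξ) • ξ) ξ = 0 := by
      rw [map_sub, LinearMap.sub_apply, map_smul, LinearMap.smul_apply, hgξ,
        smul_eq_mul]
      linear_combination (-(g Y ξ)) * e2
    have h := hD _ hZ
    rw [map_sub, LinearMap.sub_apply, map_smul, LinearMap.smul_apply, smul_eq_mul] at h
    have hξn : g ξ (nabla ξ U) = 0 := by rw [hsym]; exact hB
    rw [hξn, mul_zero, sub_zero] at h
    exact h
  exact hnondeg _ (fun Y => by rw [hsym]; exact hall Y)
end

section
/- In the setting of the ruled hypersurface ψ̂(t,z) = (z₁,…,z_{n-1}, cos(t)z_n, sin(t)z_n), the shape operator with respect to the unit normal N̂ = iξ̂ (where ξ̂ = ∂_tψ̂/|z_n|) satisfies ⟨Âξ̂, ξ̂⟩ = 0; hence the projected hypersurface in ℂPⁿ_p is minimal. -/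
open ComplexConjugate

/-- Real part of the indefinite Hermitian form on ℂ^{n+1}_p ≅ (Fin (n-1) → ℂ) × ℂ × ℂ. -/
noncomputable def Gbig (p : ℕ) {m : ℕ} (v w : (Fin m → ℂ) × ℂ × ℂ) : ℝ :=
  (∑ j : Fin m, (if (j : ℕ) < p then (-1 : ℝ) else 1) * (v.1 j * conj (w.1 j)).re)
    + (v.2.1 * conj w.2.1).re + (v.2.2 * conj w.2.2).re

/-- The analogous form on ℂⁿ_p ≅ (Fin (n-1) → ℂ) × ℂ. -/
noncomputable def Gsm (p : ℕ) {m : ℕ} (v w : (Fin m → ℂ) × ℂ) : ℝ :=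
  (∑ j : Fin m, (if (j : ℕ) < p then (-1 : ℝ) else 1) * (v.1 j * conj (w.1 j)).re)
    + (v.2 * conj w.2).re

/-! Along the integral curve of ξ̂ the normal N̂ = iξ̂ rotates in the last two coordinates, so
Âξ̂ = (i/|z_n|²)(0, cos t z_n, sin t z_n). This vector is orthogonal to ξ̂ ∝ (0, -sin t z_n, cos t z_n)
already for the complex Hermitian product, as cos t sin t |z_n|² cancels. -/

theorem Gbig_zero_fst (p : ℕ) {m : ℕ} (a b c d : ℂ) :
    Gbig p ((0 : Fin m → ℂ), a, b) (0, c, d) = (a * conj c + b * conj d).re := by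
  simp [Gbig]

theorem deriv_comp_const_add_div {E : Type*} [NormedAddCommGroup E] [NormedSpace ℝ E]
    {f : ℝ → E} {f' : E} {t : ℝ} (hf : HasDerivAt f f' t) (r : ℝ) :
    deriv (fun s => f (t + s / r)) 0 = r⁻¹ • f' := by
  have hlin : HasDerivAt (fun s : ℝ => t + s / r) r⁻¹ 0 := by
    simpa [div_eq_mul_inv] using ((hasDerivAt_id (0 : ℝ)).div_const r).const_add t
  rw [← add_zero t, ← zero_div r] at hf
  exact (hf.scomp 0 hlin).deriv

theorem hasDerivAt_rotation (m : ℕ) (c z : ℂ) (τ : ℝ) :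
    HasDerivAt
      (fun σ : ℝ => ((0 : Fin m → ℂ), c * -((Real.sin σ : ℂ) * z), c * ((Real.cos σ : ℂ) * z)))
      (0, c * -((Real.cos τ : ℂ) * z), c * -((Real.sin τ : ℂ) * z)) τ := by
  have hsin := ((Real.hasDerivAt_sin τ).ofReal_comp.mul_const z).neg.const_mul c
  have hcos := ((Real.hasDerivAt_cos τ).ofReal_comp.mul_const z).const_mul c
  simp only [Complex.ofReal_neg, neg_mul] at hcos
  exact (hasDerivAt_const τ 0).prodMk (hsin.prodMk hcos)

theorem stmt14_general (n p : ℕ) (zn : ℂ) (t : ℝ)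
    (Nfun : ℝ → (Fin (n - 1) → ℂ) × ℂ × ℂ)
    (hNfun : Nfun = fun τ => ((0 : Fin (n - 1) → ℂ),
      (Complex.I / ((‖zn‖ : ℝ) : ℂ)) * (-(((Real.sin τ : ℝ) : ℂ) * zn)),
      (Complex.I / ((‖zn‖ : ℝ) : ℂ)) * (((Real.cos τ : ℝ) : ℂ) * zn)))
    (ξh : (Fin (n - 1) → ℂ) × ℂ × ℂ)
    (hξh : ξh = ((1 / ‖zn‖ : ℝ) •
      (((0 : Fin (n - 1) → ℂ), -(((Real.sin t : ℝ) : ℂ) * zn),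
        ((Real.cos t : ℝ) : ℂ) * zn) : (Fin (n - 1) → ℂ) × ℂ × ℂ)))
    (Aξ : (Fin (n - 1) → ℂ) × ℂ × ℂ)
    (hAξ : Aξ = -(deriv (fun s => Nfun (t + s / ‖zn‖)) 0)) :
    Gbig p Aξ ξh = 0 := by
  subst hNfun hξh hAξ
  rw [deriv_comp_const_add_div (hasDerivAt_rotation _ _ _ t)]
  simp only [Prod.smul_mk, Prod.neg_mk, smul_zero, neg_zero, Gbig_zero_fst, Complex.real_smul,
    map_mul, map_neg, Complex.conj_ofReal]
  convert Complex.zero_re using 2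
  ring

/-- For the ruled hypersurface ψ̂(t,z) = (z₁,…,z_{n-1}, cos(t)z_n, sin(t)z_n), the shape
operator with respect to the unit normal N̂ = iξ̂, where ξ̂ = ∂ₜψ̂/|z_n|, satisfies
⟨Âξ̂, ξ̂⟩ = 0, where Âξ̂ = -(d/ds)|_{s=0} N̂ along the integral curve
α(s) = ψ̂(t + s/|z_n|, z) of ξ̂. -/
theorem stmt14 (n p : ℕ) (hn : 3 ≤ n) (hp1 : 1 ≤ p) (hpn : p ≤ n - 2)
    (w : Fin (n - 1) → ℂ) (zn : ℂ) (hzn : zn ≠ 0)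
    (hz : Gsm p (w, zn) (w, zn) = 1) (t : ℝ)
    (Nfun : ℝ → (Fin (n - 1) → ℂ) × ℂ × ℂ)
    (hNfun : Nfun = fun τ => ((0 : Fin (n - 1) → ℂ),
      (Complex.I / ((‖zn‖ : ℝ) : ℂ)) * (-(((Real.sin τ : ℝ) : ℂ) * zn)),
      (Complex.I / ((‖zn‖ : ℝ) : ℂ)) * (((Real.cos τ : ℝ) : ℂ) * zn)))
    (ξh : (Fin (n - 1) → ℂ) × ℂ × ℂ)
    (hξh : ξh = ((1 / ‖zn‖ : ℝ) •
      (((0 : Fin (n - 1) → ℂ), -(((Real.sin t : ℝ) : ℂ) * zn),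
        ((Real.cos t : ℝ) : ℂ) * zn) : (Fin (n - 1) → ℂ) × ℂ × ℂ)))
    (Aξ : (Fin (n - 1) → ℂ) × ℂ × ℂ)
    (hAξ : Aξ = -(deriv (fun s => Nfun (t + s / ‖zn‖)) 0)) :
    Gbig p Aξ ξh = 0 :=
  stmt14_general n p zn t Nfun hNfun ξh hξh Aξ hAξ
end

section
/- For z ∈ S^{2n-1}_{2p} with |z_n| < 1 and α(s) the integral curve of ξ̂ in Example 1, the vectors F₁(s) = α'(s) and F₂(s) = (α''(s) + α(s))/κ₁ with κ₁ = √(1/|z_n|² - 1) satisfy the circle equations ∇̂_{α'}F₁ = κ₁F₂, ∇̂_{α'}F₂ = -κ₁F₁, and the totally real condition ⟨iF₁(s), F₂(s)⟩ = 0. -/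
/-!
With `θ = t + s / r` and `r = |z_n|`, the curve `α = (w, cos θ · z_n, sin θ · z_n)` has
`α' = (0, -sin θ · z_n, cos θ · z_n) / r`, of unit length, and `α'' = -(α - (w, 0, 0)) / r²`.
As `κ₁ F₂ = α'' + α`, the first circle equation only needs `⟨α', α'⟩ = 1`. Since
`1 - 1/r² = -κ₁²`, we get `F₂ = (w / κ₁, -κ₁ cos θ · z_n, -κ₁ sin θ · z_n)`, hence
`F₂' = -κ₁ α'` and `⟨α', F₂⟩ = 0`.
All vectors involved are `(v, x z_n, y z_n)` with `x, y` real, so their Hermitian products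
reduce to planar dot products times `|z_n|²`, and multiplying one of them by `i` makes the
product purely imaginary.
-/

open ComplexConjugate

def planeVec {E : Type*} (v : E) (z : ℂ) (x y : ℝ) : E × ℂ × ℂ := (v, (x : ℂ) * z, (y : ℂ) * z)

section Algebra

variable {E : Type*}

theorem planeVec_add [AddCommGroup E] (v v' : E) (z : ℂ) (x y x' y' : ℝ) :
    planeVec v z x y + planeVec v' z x' y' = planeVec (v + v') z (x + x') (y + y') := by
  simp only [planeVec, Prod.mk_add_mk, Complex.ofReal_add, add_mul]

theorem smul_planeVec [AddCommGroup E] [Module ℝ E] (c : ℝ) (v : E) (z : ℂ) (x y : ℝ) :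
    c • planeVec v z x y = planeVec (c • v) z (c * x) (c * y) := by
  simp only [planeVec, Prod.smul_mk, Complex.real_smul, Complex.ofReal_mul, mul_assoc]

theorem planeVec_congr {v v' : E} {z : ℂ} {x y x' y' : ℝ} (hv : v = v') (hx : x = x')
    (hy : y = y') : planeVec v z x y = planeVec v' z x' y' := by
  rw [hv, hx, hy]

end Algebra

theorem one_div_sq_sub_one_pos {r : ℝ} (h0 : 0 < r) (h1 : r < 1) : 0 < 1 / r ^ 2 - 1 := by
  rw [sub_pos, one_lt_div (by positivity)]
  nlinarith

theorem hasDerivAt_cos_add_div (t r s : ℝ) :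
    HasDerivAt (fun s => Real.cos (t + s / r)) (-Real.sin (t + s / r) / r) s :=
  (((hasDerivAt_id' s).div_const r).const_add t).cos.congr_deriv (by ring)

theorem hasDerivAt_sin_add_div (t r s : ℝ) :
    HasDerivAt (fun s => Real.sin (t + s / r)) (Real.cos (t + s / r) / r) s :=
  (((hasDerivAt_id' s).div_const r).const_add t).sin.congr_deriv (by ring)

section Circle

variable {E : Type*} [NormedAddCommGroup E] [NormedSpace ℝ E]

theorem hasDerivAt_planeVec (v : E) (z : ℂ) {c d : ℝ → ℝ} {c' d' s : ℝ}
    (hc : HasDerivAt c c' s) (hd : HasDerivAt d d' s) :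
    HasDerivAt (fun s => planeVec v z (c s) (d s)) (planeVec 0 z c' d') s :=
  (hasDerivAt_const s v).prodMk ((hc.ofReal_comp.mul_const z).prodMk (hd.ofReal_comp.mul_const z))

theorem deriv_planeVec (v : E) (z : ℂ) {c d c' d' : ℝ → ℝ}
    (hc : ∀ s, HasDerivAt c (c' s) s) (hd : ∀ s, HasDerivAt d (d' s) s) :
    deriv (fun s => planeVec v z (c s) (d s)) = fun s => planeVec 0 z (c' s) (d' s) :=
  funext fun s => (hasDerivAt_planeVec v z (hc s) (hd s)).deriv

noncomputable def circleCurve (w : E) (z : ℂ) (t r s : ℝ) : E × ℂ × ℂ :=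
  planeVec w z (Real.cos (t + s / r)) (Real.sin (t + s / r))

variable (w : E) (z : ℂ) (t r : ℝ)

theorem deriv_circleCurve :
    deriv (circleCurve w z t r) = fun s =>
      planeVec 0 z (-Real.sin (t + s / r) / r) (Real.cos (t + s / r) / r) :=
  deriv_planeVec w z (hasDerivAt_cos_add_div t r) (hasDerivAt_sin_add_div t r)

theorem deriv_deriv_circleCurve :
    deriv (deriv (circleCurve w z t r)) = fun s =>
      planeVec 0 z (-Real.cos (t + s / r) / r ^ 2) (-Real.sin (t + s / r) / r ^ 2) := by
  rw [deriv_circleCurve]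
  exact deriv_planeVec 0 z
    (fun s => ((hasDerivAt_sin_add_div t r s).neg.div_const r).congr_deriv (by ring))
    (fun s => ((hasDerivAt_cos_add_div t r s).div_const r).congr_deriv (by ring))

theorem deriv_planeVec_cos_sin (v : E) (a : ℝ) :
    deriv (fun s => planeVec v z (a * Real.cos (t + s / r)) (a * Real.sin (t + s / r))) =
      a • deriv (circleCurve w z t r) := by
  rw [deriv_planeVec v z (fun s => (hasDerivAt_cos_add_div t r s).const_mul a)
    (fun s => (hasDerivAt_sin_add_div t r s).const_mul a), deriv_circleCurve]
  funext s
  rw [Pi.smul_apply, smul_planeVec, smul_zero]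

theorem smul_deriv_deriv_add_circleCurve {κ : ℝ} (hr : r ≠ 0) (hκ : κ ≠ 0)
    (hκ_sq : κ ^ 2 * r ^ 2 = 1 - r ^ 2) (s : ℝ) :
    (1 / κ) • (deriv (deriv (circleCurve w z t r)) s + circleCurve w z t r s) =
      planeVec (κ⁻¹ • w) z (-κ * Real.cos (t + s / r)) (-κ * Real.sin (t + s / r)) := by
  have key (x : ℝ) : 1 / κ * (-x / r ^ 2 + x) = -κ * x := by
    field_simp
    linear_combination x * hκ_sq
  rw [deriv_deriv_circleCurve, circleCurve, planeVec_add, smul_planeVec]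
  exact planeVec_congr (by rw [zero_add, one_div]) (key _) (key _)

end Circle

section HermitianForm

variable (p : ℕ) {m : ℕ}

theorem ofReal_mul_mul_conj (x x' : ℝ) (z : ℂ) :
    (x : ℂ) * z * conj ((x' : ℂ) * z) = ((x * x' * ‖z‖ ^ 2 : ℝ) : ℂ) := by
  rw [map_mul, Complex.conj_ofReal, mul_mul_mul_comm, Complex.mul_conj, Complex.normSq_eq_norm_sq]
  push_cast
  ring

theorem Gbig_planeVec (z : ℂ) (v : Fin m → ℂ) (x y x' y' : ℝ) :
    Gbig p (planeVec 0 z x y) (planeVec v z x' y') = (x * x' + y * y') * ‖z‖ ^ 2 := by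
  simp only [Gbig, planeVec, Pi.zero_apply, zero_mul, Complex.zero_re, mul_zero,
    Finset.sum_const_zero, zero_add, ofReal_mul_mul_conj, Complex.ofReal_re]
  ring

theorem Gbig_I_smul_planeVec (z : ℂ) (v : Fin m → ℂ) (x y x' y' : ℝ) :
    Gbig p (Complex.I • planeVec 0 z x y) (planeVec v z x' y') = 0 := by
  simp only [Gbig, planeVec, Prod.smul_mk, smul_zero, Pi.zero_apply, zero_mul, Complex.zero_re,
    mul_zero, Finset.sum_const_zero, smul_eq_mul, mul_assoc Complex.I,
    ofReal_mul_mul_conj, Complex.I_mul_re, Complex.ofReal_im, neg_zero, add_zero]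

theorem Gbig_deriv_circleCurve_self (w : Fin m → ℂ) {z : ℂ} (hz : z ≠ 0) (t s : ℝ) :
    Gbig p (deriv (circleCurve w z t ‖z‖) s) (deriv (circleCurve w z t ‖z‖) s) = 1 := by
  have hr : ‖z‖ ≠ 0 := norm_ne_zero_iff.2 hz
  rw [deriv_circleCurve, Gbig_planeVec]
  generalize t + s / ‖z‖ = θ
  field_simp
  linear_combination Real.sin_sq_add_cos_sq θ

end HermitianForm

theorem stmt15_general (n p : ℕ)
    (w : Fin (n - 1) → ℂ) (zn : ℂ) (hzn : zn ≠ 0) (hzn1 : ‖zn‖ < 1)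
    (t : ℝ)
    (α : ℝ → (Fin (n - 1) → ℂ) × ℂ × ℂ)
    (hα : α = fun s => (w, ((Real.cos (t + s / ‖zn‖) : ℝ) : ℂ) * zn,
      ((Real.sin (t + s / ‖zn‖) : ℝ) : ℂ) * zn))
    (κ₁ : ℝ) (hκ₁ : κ₁ = Real.sqrt (1 / (‖zn‖) ^ 2 - 1))
    (F₁ F₂ : ℝ → (Fin (n - 1) → ℂ) × ℂ × ℂ)
    (hF₁ : F₁ = deriv α)
    (hF₂ : F₂ = fun s => (1 / κ₁ : ℝ) • (deriv (deriv α) s + α s)) :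
    ∀ s, deriv F₁ s + Gbig p (F₁ s) (F₁ s) • α s = κ₁ • F₂ s ∧
      deriv F₂ s + Gbig p (F₁ s) (F₂ s) • α s = -(κ₁ • F₁ s) ∧
      Gbig p (Complex.I • F₁ s) (F₂ s) = 0 := by
  have hr : 0 < ‖zn‖ := norm_pos_iff.2 hzn
  have hpos := one_div_sq_sub_one_pos hr hzn1
  have hκ : κ₁ ≠ 0 := hκ₁ ▸ (Real.sqrt_pos.2 hpos).ne'
  have hκ_sq : κ₁ ^ 2 * ‖zn‖ ^ 2 = 1 - ‖zn‖ ^ 2 := by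
    rw [hκ₁, Real.sq_sqrt hpos.le]
    field_simp
  replace hα : α = circleCurve w zn t ‖zn‖ := hα
  have hF₂' : F₂ = fun s =>
      planeVec (κ₁⁻¹ • w) zn (-κ₁ * Real.cos (t + s / ‖zn‖)) (-κ₁ * Real.sin (t + s / ‖zn‖)) := by
    rw [hF₂, hα]
    exact funext (smul_deriv_deriv_add_circleCurve w zn t _ hr.ne' hκ hκ_sq)
  intro s
  have hF₁_unit : Gbig p (F₁ s) (F₁ s) = 1 := by
    rw [hF₁, hα]
    exact Gbig_deriv_circleCurve_self p w hzn t s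
  have hF₁_perp_F₂ : Gbig p (F₁ s) (F₂ s) = 0 := by
    rw [hF₁, hα, deriv_circleCurve, hF₂', Gbig_planeVec]
    ring
  refine ⟨?_, ?_, ?_⟩
  · rw [hF₁_unit, one_smul, hF₂, hF₁, smul_smul, mul_one_div_cancel hκ, one_smul]
  · rw [hF₁_perp_F₂, zero_smul, add_zero, hF₂', deriv_planeVec_cos_sin w, hF₁, hα, neg_smul,
      Pi.neg_apply, Pi.smul_apply]
  · rw [hF₁, hα, deriv_circleCurve, hF₂']
    exact Gbig_I_smul_planeVec p zn _ _ _ _ _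

/-- For z = (w,z_n) ∈ S^{2n-1}_{2p} with 0 < |z_n| < 1 and the integral curve
α(s) = (z₁,…,z_{n-1}, cos(t+s/|z_n|)z_n, sin(t+s/|z_n|)z_n) of ξ̂, the fields
F₁ = α' and F₂ = (α'' + α)/κ₁ with κ₁ = √(1/|z_n|² − 1) satisfy the circle equations
∇̂_{α'}F₁ = κ₁F₂ and ∇̂_{α'}F₂ = −κ₁F₁ (where ∇̂_{α'}Y = Y' + ⟨α',Y⟩α by the Gauss
formula of the hyperquadric), together with the totally real condition ⟨iF₁,F₂⟩ = 0. -/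
theorem stmt15 (n p : ℕ) (hn : 3 ≤ n) (hp1 : 1 ≤ p) (hpn : p ≤ n - 2)
    (w : Fin (n - 1) → ℂ) (zn : ℂ) (hzn : zn ≠ 0) (hzn1 : ‖zn‖ < 1)
    (hz : Gsm p (w, zn) (w, zn) = 1) (t : ℝ)
    (α : ℝ → (Fin (n - 1) → ℂ) × ℂ × ℂ)
    (hα : α = fun s => (w, ((Real.cos (t + s / ‖zn‖) : ℝ) : ℂ) * zn,
      ((Real.sin (t + s / ‖zn‖) : ℝ) : ℂ) * zn))
    (κ₁ : ℝ) (hκ₁ : κ₁ = Real.sqrt (1 / (‖zn‖) ^ 2 - 1))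
    (F₁ F₂ : ℝ → (Fin (n - 1) → ℂ) × ℂ × ℂ)
    (hF₁ : F₁ = deriv α)
    (hF₂ : F₂ = fun s => (1 / κ₁ : ℝ) • (deriv (deriv α) s + α s)) :
    ∀ s, deriv F₁ s + Gbig p (F₁ s) (F₁ s) • α s = κ₁ • F₂ s ∧
      deriv F₂ s + Gbig p (F₁ s) (F₂ s) • α s = -(κ₁ • F₁ s) ∧
      Gbig p (Complex.I • F₁ s) (F₂ s) = 0 :=
  stmt15_general n p w zn hzn hzn1 t α hα κ₁ hκ₁ F₁ F₂ hF₁ hF₂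
end

section
/- For the integral curve α(s) = (sinh(t+s/|z_n|)z_n, z₁,…,z_{n-1}, cosh(t+s/|z_n|)z_n) (with ⟨α',α'⟩ = -1), the vector F(s) := α''(s) - α(s) satisfies ⟨F(s),F(s)⟩ = 1/|z_n|² - 1; in particular F is spacelike when |z_n| < 1, lightlike or zero when |z_n| = 1 (zero exactly when z = (0,…,0,e^{ir})), and timelike when |z_n| > 1. -/
/-! The orbit `s ↦ (sinh(t + s/a) z, w, cosh(t + s/a) z)` has `α'' = a⁻² (sinh z, 0, cosh z)`,
so `F = α'' - α = (a⁻² - 1)(sinh z, 0, cosh z) - (0, w, 0)`. Since `cosh² - sinh² = 1` and the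
middle block carries `1 - ‖z‖²` by the normalisation of `(w, z)`, this gives
`⟨F, F⟩ = (a⁻² - 1)² a² + 1 - a² = a⁻² - 1` for `a = ‖z‖`. -/

open ComplexConjugate

/-- Real part of the indefinite Hermitian form on ℂ^{n+1}_p, modelled as
ℂ × (Fin (n-1) → ℂ) × ℂ: first coordinate timelike, middle block with p-1 further
minus signs, last coordinate spacelike. -/
noncomputable def Gbig' (p : ℕ) {m : ℕ} (v w : ℂ × (Fin m → ℂ) × ℂ) : ℝ :=
  -(v.1 * conj w.1).re
    + (∑ j : Fin m, (if (j : ℕ) < p - 1 then (-1 : ℝ) else 1) * (v.2.1 j * conj (w.2.1 j)).re)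
    + (v.2.2 * conj w.2.2).re

/-- The form of ℂⁿ_{p-1} on (Fin (n-1) → ℂ) × ℂ (with p-1 minus signs). -/
noncomputable def Gsm' (p : ℕ) {m : ℕ} (v w : (Fin m → ℂ) × ℂ) : ℝ :=
  (∑ j : Fin m, (if (j : ℕ) < p - 1 then (-1 : ℝ) else 1) * (v.1 j * conj (w.1 j)).re)
    + (v.2 * conj w.2).re

open Real

section Forms

variable (p : ℕ) {m : ℕ}

noncomputable def blockForm (v : Fin m → ℂ) : ℝ :=
  ∑ j : Fin m, (if (j : ℕ) < p - 1 then (-1 : ℝ) else 1) * ‖v j‖ ^ 2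

theorem re_mul_conj_self (z : ℂ) : (z * conj z).re = ‖z‖ ^ 2 := by
  rw [Complex.mul_conj', ← Complex.ofReal_pow, Complex.ofReal_re]

theorem Gsm'_self (v : Fin m → ℂ) (y : ℂ) :
    Gsm' p (v, y) (v, y) = blockForm p v + ‖y‖ ^ 2 := by
  simp only [Gsm', blockForm, re_mul_conj_self]

theorem Gbig'_self (x : ℂ) (v : Fin m → ℂ) (y : ℂ) :
    Gbig' p (x, v, y) (x, v, y) = -‖x‖ ^ 2 + blockForm p v + ‖y‖ ^ 2 := by
  simp only [Gbig', blockForm, re_mul_conj_self]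

theorem blockForm_neg (v : Fin m → ℂ) : blockForm p (-v) = blockForm p v := by
  simp only [blockForm, Pi.neg_apply, norm_neg]

theorem blockForm_zero : blockForm p (0 : Fin m → ℂ) = 0 := by
  simp [blockForm]

theorem Gbig'_self_ofReal_mul (x y : ℝ) (z : ℂ) (v : Fin m → ℂ) :
    Gbig' p ((x : ℂ) * z, v, (y : ℂ) * z) ((x : ℂ) * z, v, (y : ℂ) * z)
      = (y ^ 2 - x ^ 2) * ‖z‖ ^ 2 + blockForm p v := by
  simp only [Gbig'_self, norm_mul, Complex.norm_real, Real.norm_eq_abs, mul_pow, sq_abs]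
  ring

end Forms

section Curve

variable {m : ℕ}

noncomputable def hypCurve (t a : ℝ) (z : ℂ) (w : Fin m → ℂ) : ℝ → ℂ × (Fin m → ℂ) × ℂ :=
  fun s => ((sinh (t + s / a) : ℂ) * z, w, (cosh (t + s / a) : ℂ) * z)

theorem hasDerivAt_ofReal_comp_mul {f f' : ℝ → ℝ} (hf : ∀ x, HasDerivAt f (f' x) x)
    (t a : ℝ) (z : ℂ) (s : ℝ) :
    HasDerivAt (fun s : ℝ => (f (t + s / a) : ℂ) * z) ((f' (t + s / a) / a : ℝ) * z) s := by
  have hlin : HasDerivAt (fun s : ℝ => t + s / a) (1 / a) s := by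
    simpa using ((hasDerivAt_id s).div_const a).const_add t
  have hcomp := (((hf _).comp s hlin).ofReal_comp).mul_const z
  exact hcomp.congr_deriv (by push_cast; ring)

theorem deriv_hypCurve (t a : ℝ) (z : ℂ) (w : Fin m → ℂ) :
    deriv (hypCurve t a z w) = fun s =>
      ((cosh (t + s / a) / a : ℝ) * z, 0, (sinh (t + s / a) / a : ℝ) * z) := by
  funext s
  exact ((hasDerivAt_ofReal_comp_mul hasDerivAt_sinh t a z s).prodMk
    ((hasDerivAt_const s w).prodMk (hasDerivAt_ofReal_comp_mul hasDerivAt_cosh t a z s))).deriv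

theorem deriv_deriv_hypCurve (t a : ℝ) (z : ℂ) (w : Fin m → ℂ) :
    deriv (deriv (hypCurve t a z w)) = fun s =>
      ((sinh (t + s / a) / a ^ 2 : ℝ) * z, 0, (cosh (t + s / a) / a ^ 2 : ℝ) * z) := by
  funext s
  have hc := hasDerivAt_ofReal_comp_mul (fun x => (hasDerivAt_cosh x).div_const a) t a z s
  have hs := hasDerivAt_ofReal_comp_mul (fun x => (hasDerivAt_sinh x).div_const a) t a z s
  rw [deriv_hypCurve, (hc.prodMk ((hasDerivAt_const s (0 : Fin m → ℂ)).prodMk hs)).deriv]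
  simp only [div_div, sq]

theorem deriv_deriv_hypCurve_sub (t a : ℝ) (z : ℂ) (w : Fin m → ℂ) (s : ℝ) :
    deriv (deriv (hypCurve t a z w)) s - hypCurve t a z w s =
      (((1 / a ^ 2 - 1) * sinh (t + s / a) : ℝ) * z, -w,
        ((1 / a ^ 2 - 1) * cosh (t + s / a) : ℝ) * z) := by
  simp only [deriv_deriv_hypCurve, hypCurve, Prod.mk_sub_mk, zero_sub, Prod.mk.injEq]
  refine ⟨?_, trivial, ?_⟩ <;> push_cast <;> ring

end Curve

theorem stmt19_general (n p : ℕ)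
    (w : Fin (n - 1) → ℂ) (zn : ℂ) (hzn : zn ≠ 0)
    (hz : Gsm' p (w, zn) (w, zn) = 1) (t : ℝ)
    (α : ℝ → ℂ × (Fin (n - 1) → ℂ) × ℂ)
    (hα : α = fun s => (((Real.sinh (t + s / ‖zn‖) : ℝ) : ℂ) * zn, w,
      ((Real.cosh (t + s / ‖zn‖) : ℝ) : ℂ) * zn))
    (F : ℝ → ℂ × (Fin (n - 1) → ℂ) × ℂ)
    (hF : F = fun s => deriv (deriv α) s - α s) :
    ∀ s, Gbig' p (deriv α s) (deriv α s) = -1 ∧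
      Gbig' p (F s) (F s) = 1 / (‖zn‖) ^ 2 - 1 ∧
      (‖zn‖ < 1 → 0 < Gbig' p (F s) (F s)) ∧
      (‖zn‖ = 1 → (F s = 0 ↔ w = 0)) ∧
      (1 < ‖zn‖ → Gbig' p (F s) (F s) < 0) := by
  intro s
  change α = hypCurve t ‖zn‖ zn w at hα
  subst hF
  have ha : 0 < ‖zn‖ := norm_pos_iff.mpr hzn
  have hblock : blockForm p w = 1 - ‖zn‖ ^ 2 := by rw [Gsm'_self] at hz; linarith
  have hFs := deriv_deriv_hypCurve_sub t ‖zn‖ zn w s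
  rw [← hα] at hFs
  have hG : Gbig' p (deriv (deriv α) s - α s) (deriv (deriv α) s - α s) = 1 / ‖zn‖ ^ 2 - 1 := by
    rw [hFs, Gbig'_self_ofReal_mul, blockForm_neg, hblock, mul_pow, mul_pow,
      ← mul_sub, cosh_sq_sub_sinh_sq]
    field_simp
    ring
  refine ⟨?_, hG, fun h => ?_, fun h => ?_, fun h => ?_⟩
  · rw [hα, deriv_hypCurve, Gbig'_self_ofReal_mul, blockForm_zero, div_pow, div_pow,
      ← sub_div, ← neg_sub, cosh_sq_sub_sinh_sq, add_zero]
    field_simp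
  · rw [hG, sub_pos, one_lt_div (by positivity)]; nlinarith
  · simp [hFs, h, Prod.ext_iff]
  · rw [hG, sub_neg, div_lt_one (by positivity)]; nlinarith

/-- For the integral curve α(s) = (sinh(t+s/|z_n|)z_n, z₁,…,z_{n-1}, cosh(t+s/|z_n|)z_n),
with z = (w,z_n) ∈ S^{2n-1}_{2(p-1)}, z_n ≠ 0, one has ⟨α',α'⟩ = -1, and the vector
F(s) := α''(s) - α(s) satisfies ⟨F,F⟩ = 1/|z_n|² - 1; in particular F is spacelike when
|z_n| < 1, lightlike or zero when |z_n| = 1 (zero precisely when w = 0, i.e.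
z = (0,…,0,e^{ir})), and timelike when |z_n| > 1. -/
theorem stmt19 (n p : ℕ) (hn : 3 ≤ n) (hp1 : 2 ≤ p) (hpn : p ≤ n - 1)
    (w : Fin (n - 1) → ℂ) (zn : ℂ) (hzn : zn ≠ 0)
    (hz : Gsm' p (w, zn) (w, zn) = 1) (t : ℝ)
    (α : ℝ → ℂ × (Fin (n - 1) → ℂ) × ℂ)
    (hα : α = fun s => (((Real.sinh (t + s / ‖zn‖) : ℝ) : ℂ) * zn, w,
      ((Real.cosh (t + s / ‖zn‖) : ℝ) : ℂ) * zn))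
    (F : ℝ → ℂ × (Fin (n - 1) → ℂ) × ℂ)
    (hF : F = fun s => deriv (deriv α) s - α s) :
    ∀ s, Gbig' p (deriv α s) (deriv α s) = -1 ∧
      Gbig' p (F s) (F s) = 1 / (‖zn‖) ^ 2 - 1 ∧
      (‖zn‖ < 1 → 0 < Gbig' p (F s) (F s)) ∧
      (‖zn‖ = 1 → (F s = 0 ↔ w = 0)) ∧
      (1 < ‖zn‖ → Gbig' p (F s) (F s) < 0) :=
  stmt19_general n p w zn hzn hz t α hα F hF
end
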